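/- Let T_C be a complete binary tree with transition set S(T_C) and define the dynamic-programming table M(v, 1) = w_1(v)·m(v) for v in the left boundary B_l (and 0 otherwise), and M(v, n) = w_n(v)·m(v)·∑_{(u,v) ∈ S(T_C)} M(u, n-1) for n > 1, where w_n(v) ≥ 0 are arbitrary weights. Then ∑_{v ∈ B_r} M(v, N) = ∑_{T : |L(T)| = N} ∏_{n=1}^N w_n(L_n(T))·m(L_n(T)), where the sum is over internal trees of T_C with exactly N leaves. -/

import Mathlib

/-- Full binary trees: every vertex has 0 or 2 children. -/
inductive FBT where
  | leaf : FBT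
  | node : FBT → FBT → FBT
deriving DecidableEq

namespace FBT

/-- Depth of a full binary tree. -/
def depth : FBT → ℕ
  | leaf => 0
  | node a b => max a.depth b.depth + 1

/-- Positions (reversed root-paths: head is the edge nearest the vertex) of the
leaves of `T`, in left-to-right order. -/
def leaves : FBT → List (List Bool)
  | leaf => [[]]
  | node a b => a.leaves.map (· ++ [false]) ++ b.leaves.map (· ++ [true])

/-- Total number of vertices. -/
def numNodes : FBT → ℕ
  | leaf => 1
  | node a b => a.numNodes + b.numNodes + 1

/-- Number of internal (non-leaf) vertices. -/
def internals : FBT → ℕ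
  | leaf => 0
  | node a b => a.internals + b.internals + 1

/-- The recursive probability function π of the stick-breaking prior:
`pi l T pos` where `pos` is the (reversed) position of the root of `T`. -/
def pi (l : List Bool → ℝ) : FBT → List Bool → ℝ
  | leaf, pos => l pos
  | node a b, pos => (1 - l pos) * pi l a (false :: pos) * pi l b (true :: pos)

/-- Probability of an internal tree: `p(T) = π(root)`. -/
def pTree (l : List Bool → ℝ) (T : FBT) : ℝ := pi l T []

/-- The memoized value m̃, with `m̃(parent(root)) = 1`. -/
noncomputable def mt (l : List Bool → ℝ) : List Bool → ℝ
  | [] => 1 - l []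
  | (b :: p) => Real.sqrt (mt l p) * (1 - l (b :: p))

/-- The memoized value m at a vertex: `m(v) = m̃(parent v)^(1/2) · l v`. -/
noncomputable def mleaf (l : List Bool → ℝ) : List Bool → ℝ
  | [] => l []
  | (b :: p) => Real.sqrt (mt l p) * l (b :: p)

/-- `m̃(parent v)`, with the convention `m̃(parent root) = 1`. -/
noncomputable def mparent (l : List Bool → ℝ) : List Bool → ℝ
  | [] => 1
  | (_ :: p) => mt l p

/-- The set of internal trees of the complete binary tree of depth `D`,
i.e. full binary trees of depth at most `D`. -/
def trees : ℕ → Finset FBT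
  | 0 => {leaf}
  | (D+1) => insert leaf ((trees D ×ˢ trees D).image (fun p => node p.1 p.2))

/-- Consecutive-leaf pairs of a single tree. -/
def transitions (T : FBT) : Finset (List Bool × List Bool) :=
  (T.leaves.zip T.leaves.tail).toFinset

/-- The set `S(T_C)` of successive leaf transitions of the complete binary
tree of depth `D`. -/
def S (D : ℕ) : Finset (List Bool × List Bool) := (trees D).biUnion transitions

/-- The left boundary of the complete binary tree of depth `D`. -/
def Bl (D : ℕ) : Finset (List Bool) :=
  (Finset.range (D+1)).image (fun k => List.replicate k false)

/-- The right boundary of the complete binary tree of depth `D`. -/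
def Br (D : ℕ) : Finset (List Bool) :=
  (Finset.range (D+1)).image (fun k => List.replicate k true)

/-- The marginalisation dynamic-programming table (indexed from `n = 1`). -/
def M (S : Finset (List Bool × List Bool)) (Bl : Finset (List Bool))
    (w : ℕ → List Bool → ℝ) (mw : List Bool → ℝ) : ℕ → List Bool → ℝ
  | 0, _ => 0
  | 1, v => if v ∈ Bl then w 1 v * mw v else 0
  | (n+2), v => w (n+2) v * mw v *
      ∑ p ∈ S.filter (fun p => p.2 = v), M S Bl w mw (n+1) p.1

/-- The Viterbi-style max-product dynamic-programming table. -/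
def Mstar (S : Finset (List Bool × List Bool)) (Bl : Finset (List Bool))
    (w : ℕ → List Bool → NNReal) (mw : List Bool → NNReal) : ℕ → List Bool → NNReal
  | 0, _ => 0
  | 1, v => if v ∈ Bl then w 1 v * mw v else 0
  | (n+2), v => w (n+2) v * mw v *
      (S.filter (fun p => p.2 = v)).sup (fun p => Mstar S Bl w mw (n+1) p.1)

/-- The complete binary tree of depth `D`, as a full binary tree. -/
def completeTree : ℕ → FBT
  | 0 => leaf
  | (D+1) => node (completeTree D) (completeTree D)

end FBT

/-!
Unfolding its recursion, `M n v` is the sum, over the walks `v₁ … vₙ = v` of the transition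
graph that start in the left boundary, of the products of the vertex weights. Positions are
reversed root paths, so the last letter of a position says in which subtree of the root it lies.
A transition of depth `D + 1` either stays in one subtree (and is a transition of depth `D` after
the last letter is dropped) or jumps from the rightmost leaf of the left subtree to the leftmost
leaf of the right one. Hence a walk from the left to the right boundary crosses exactly once,
and cutting it there gives two such walks of depth `D`: by induction on `D` these walks are
exactly the leaf sequences of the internal trees, which determine the tree.
-/

namespace List

variable {α β : Type*}

theorem zip_tail_append {l₁ l₂ : List α} {x y : α} (hx : l₁.getLast? = some x)
    (hy : l₂.head? = some y) :
    (l₁ ++ l₂).zip (l₁ ++ l₂).tail = l₁.zip l₁.tail ++ (x, y) :: l₂.zip l₂.tail := by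
  induction l₁ with
  | nil => simp at hx
  | cons a t ih =>
    cases t with
    | nil =>
      obtain ⟨l₂, rfl⟩ : ∃ l, l₂ = y :: l := ⟨l₂.tail, (cons_head?_tail hy).symm⟩
      simp_all
    | cons b t =>
      rw [getLast?_cons_cons] at hx
      have := ih hx
      simp only [cons_append, tail_cons, zip_cons_cons] at this ⊢
      rw [this]

theorem zip_tail_map (f : α → β) (l : List α) :
    (l.map f).zip (l.map f).tail = (l.zip l.tail).map (Prod.map f f) := by
  rw [← map_tail, zip_map]

theorem isChain_mem_zip_tail (l : List α) : l.IsChain (fun a b => (a, b) ∈ l.zip l.tail) := by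
  induction l with
  | nil => exact .nil
  | cons a t ih =>
    cases t with
    | nil => exact .singleton a
    | cons b t => exact .cons_cons (by simp) (ih.imp fun _ _ h => mem_cons_of_mem _ h)

end List

namespace Finset

theorem prod_range_succ_getD_append_singleton {α β : Type*} [CommMonoid β]
    (f : ℕ → α → β) {L : List α} {n : ℕ} (hL : L.length = n) (v d : α) :
    ∏ i ∈ range (n + 1), f i ((L ++ [v]).getD i d) =
      (∏ i ∈ range n, f i (L.getD i d)) * f n v := by
  rw [prod_range_succ, List.getD_append_right _ _ _ _ hL.le, hL, Nat.sub_self]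
  congr 1
  exact prod_congr rfl fun i hi =>
    by rw [List.getD_append _ _ _ _ (hL ▸ mem_range.1 hi)]

end Finset

namespace FBT

theorem leaf_mem_trees (D : ℕ) : leaf ∈ trees D := by
  cases D <;> simp [trees]

theorem node_mem_trees_succ {D : ℕ} {a b : FBT} :
    node a b ∈ trees (D + 1) ↔ a ∈ trees D ∧ b ∈ trees D := by
  simp [trees]

theorem mem_image_replicate {D : ℕ} {c : Bool} {v : List Bool} :
    v ∈ (Finset.range (D + 1)).image (fun k => List.replicate k c) ↔
      v.length ≤ D ∧ ∀ b ∈ v, b = c := by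
  simp [List.eq_replicate_iff, eq_comm]

theorem mem_Bl {D : ℕ} {v : List Bool} : v ∈ Bl D ↔ v.length ≤ D ∧ ∀ b ∈ v, b = false :=
  mem_image_replicate

theorem mem_Br {D : ℕ} {v : List Bool} : v ∈ Br D ↔ v.length ≤ D ∧ ∀ b ∈ v, b = true :=
  mem_image_replicate

theorem eq_nil_of_mem_Bl_of_mem_Br {D : ℕ} {v : List Bool} (hl : v ∈ Bl D) (hr : v ∈ Br D) :
    v = [] :=
  List.eq_nil_iff_forall_not_mem.2 fun b hb => by
    simpa [(mem_Bl.1 hl).2 b hb] using (mem_Br.1 hr).2 b hb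

theorem head?_leaves_mem_Bl {D : ℕ} {T : FBT} (hT : T ∈ trees D) :
    ∃ x ∈ Bl D, T.leaves.head? = some x := by
  induction D generalizing T with
  | zero => cases T <;> simp_all [trees, leaves, mem_Bl]
  | succ D ih =>
    cases T with
    | leaf => simp [leaves, mem_Bl]
    | node a b =>
      obtain ⟨x, hx, hax⟩ := ih (node_mem_trees_succ.1 hT).1
      exact ⟨x ++ [false], by simpa [mem_Bl] using hx, by simp [leaves, hax]⟩

theorem getLast?_leaves_mem_Br {D : ℕ} {T : FBT} (hT : T ∈ trees D) :
    ∃ y ∈ Br D, T.leaves.getLast? = some y := by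
  induction D generalizing T with
  | zero => cases T <;> simp_all [trees, leaves, mem_Br]
  | succ D ih =>
    cases T with
    | leaf => simp [leaves, mem_Br]
    | node a b =>
      obtain ⟨y, hy, hby⟩ := ih (node_mem_trees_succ.1 hT).2
      exact ⟨y ++ [true], by simpa [mem_Br] using hy, by simp [leaves, hby]⟩

theorem not_mem_S_zero (u v : List Bool) : (u, v) ∉ S 0 := by
  simp [S, trees, transitions, leaves]

theorem mem_S_succ_cases {D : ℕ} {u v : List Bool} (h : (u, v) ∈ S (D + 1)) :
    (∃ c u' v', (u', v') ∈ S D ∧ u = u' ++ [c] ∧ v = v' ++ [c]) ∨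
      ∃ u' ∈ Br D, ∃ v' ∈ Bl D, u = u' ++ [false] ∧ v = v' ++ [true] := by
  obtain ⟨T, hT, huv⟩ := Finset.mem_biUnion.1 h
  cases T with
  | leaf => simp [transitions, leaves] at huv
  | node a b =>
    obtain ⟨ha, hb⟩ := node_mem_trees_succ.1 hT
    obtain ⟨x, hx, hax⟩ := getLast?_leaves_mem_Br ha
    obtain ⟨y, hy, hby⟩ := head?_leaves_mem_Bl hb
    have mem_S : ∀ {T}, T ∈ trees D → ∀ {p}, p ∈ T.leaves.zip T.leaves.tail → p ∈ S D :=
      fun hT _ hp => Finset.mem_biUnion.2 ⟨_, hT, List.mem_toFinset.2 hp⟩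
    rw [transitions, List.mem_toFinset, leaves,
      List.zip_tail_append (x := x ++ [false]) (y := y ++ [true]) (by simp [hax]) (by simp [hby]),
      List.zip_tail_map, List.zip_tail_map] at huv
    simp only [List.mem_append, List.mem_cons, List.mem_map, Prod.ext_iff, Prod.map] at huv
    rcases huv with ⟨p, hp, rfl, rfl⟩ | ⟨rfl, rfl⟩ | ⟨p, hp, rfl, rfl⟩
    · exact .inl ⟨false, p.1, p.2, mem_S ha hp, rfl, rfl⟩
    · exact .inr ⟨x, hx, y, hy, rfl, rfl⟩
    · exact .inl ⟨true, p.1, p.2, mem_S hb hp, rfl, rfl⟩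

def IsBoundaryWalk (D : ℕ) (L : List (List Bool)) : Prop :=
  L.IsChain (fun u v => (u, v) ∈ S D) ∧ (∃ x ∈ Bl D, L.head? = some x) ∧
    ∃ y ∈ Br D, L.getLast? = some y

theorem isBoundaryWalk_leaves {D : ℕ} {T : FBT} (hT : T ∈ trees D) :
    IsBoundaryWalk D T.leaves :=
  ⟨(List.isChain_mem_zip_tail _).imp fun _ _ h =>
      Finset.mem_biUnion.2 ⟨T, hT, List.mem_toFinset.2 h⟩,
    head?_leaves_mem_Bl hT, getLast?_leaves_mem_Br hT⟩

section Split

variable {D : ℕ}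

theorem exists_walk_right_subtree : ∀ (L : List (List Bool)) (v : List Bool),
    ((v ++ [true]) :: L).IsChain (fun u v => (u, v) ∈ S (D + 1)) →
    ∃ B, (v ++ [true]) :: L = (v :: B).map (· ++ [true]) ∧
      (v :: B).IsChain (fun u v => (u, v) ∈ S D)
  | [], v, _ => ⟨[], rfl, .singleton v⟩
  | y :: L, v, h => by
    rw [List.isChain_cons_cons] at h
    rcases mem_S_succ_cases h.1 with ⟨c, u', v', huv, hu, rfl⟩ | ⟨u', -, v', -, hu, -⟩
    · obtain ⟨rfl, rfl⟩ : v = u' ∧ true = c := by simpa using hu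
      obtain ⟨B, hB, hchain⟩ := exists_walk_right_subtree L v' h.2
      exact ⟨v' :: B, by rw [List.map_cons, ← hB], hchain.cons_cons huv⟩
    · simp at hu

theorem exists_walk_split : ∀ (L : List (List Bool)) (u : List Bool),
    ((u ++ [false]) :: L).IsChain (fun u v => (u, v) ∈ S (D + 1)) →
    (∃ y ∈ Br (D + 1), ((u ++ [false]) :: L).getLast? = some y) →
    ∃ A B : List (List Bool),
      (u ++ [false]) :: L = (u :: A).map (· ++ [false]) ++ B.map (· ++ [true]) ∧
      (u :: A).IsChain (fun u v => (u, v) ∈ S D) ∧ (∃ y ∈ Br D, (u :: A).getLast? = some y) ∧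
      B.IsChain (fun u v => (u, v) ∈ S D) ∧ ∃ x ∈ Bl D, B.head? = some x
  | [], u, _, ⟨y, hy, hu⟩ => by
    obtain rfl : u ++ [false] = y := by simpa using hu
    simp [mem_Br] at hy
  | y :: L, u, h, hlast => by
    rw [List.isChain_cons_cons] at h
    rw [List.getLast?_cons_cons] at hlast
    rcases mem_S_succ_cases h.1 with ⟨c, u', v', huv, hu, rfl⟩ | ⟨u', hu', v', hv', hu, rfl⟩
    · obtain ⟨rfl, rfl⟩ : u = u' ∧ false = c := by simpa using hu
      obtain ⟨A, B, hAB, hA, hAlast, hB, hBhead⟩ := exists_walk_split L v' h.2 hlast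
      refine ⟨v' :: A, B, ?_, hA.cons_cons huv, ?_, hB, hBhead⟩
      · rw [List.map_cons, List.cons_append, ← hAB]
      · rwa [List.getLast?_cons_cons]
    · obtain rfl : u = u' := by simpa using hu
      obtain ⟨B, hB, hchain⟩ := exists_walk_right_subtree L v' h.2
      exact ⟨[], v' :: B, by rw [hB]; rfl, .singleton u, ⟨u, hu', rfl⟩, hchain, ⟨v', hv', rfl⟩⟩

theorem IsBoundaryWalk.exists_split {x y : List Bool} {L : List (List Bool)}
    (h : IsBoundaryWalk (D + 1) (x :: y :: L)) :
    ∃ A B : List (List Bool), x :: y :: L = A.map (· ++ [false]) ++ B.map (· ++ [true]) ∧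
      IsBoundaryWalk D A ∧ IsBoundaryWalk D B := by
  obtain ⟨hchain, ⟨x', hx, hx'⟩, hlast⟩ := h
  obtain rfl : x = x' := by simpa using hx'
  obtain ⟨u, rfl⟩ : ∃ u, x = u ++ [false] := by
    rcases mem_S_succ_cases (List.isChain_cons_cons.1 hchain).1 with
      ⟨c, u, -, -, rfl, -⟩ | ⟨u, -, -, -, rfl, -⟩
    · obtain rfl : c = false := by simp only [mem_Bl] at hx; exact hx.2 c (by simp)
      exact ⟨u, rfl⟩
    · exact ⟨u, rfl⟩
  obtain ⟨A, B, hAB, hA, hAlast, hB, b, hb, hBhead⟩ := exists_walk_split (y :: L) u hchain hlast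
  obtain ⟨z, hz, hzlast⟩ := hlast
  have hBne : B ≠ [] := by rintro rfl; simp at hBhead
  rw [hAB, List.getLast?_append_of_ne_nil _ (by simpa using hBne), List.getLast?_map,
    Option.map_eq_some_iff] at hzlast
  obtain ⟨z', hz', rfl⟩ := hzlast
  exact ⟨u :: A, B, hAB, ⟨hA, ⟨u, by simpa [mem_Bl] using hx, rfl⟩, hAlast⟩,
    hB, ⟨b, hb, hBhead⟩, z', by simpa [mem_Br] using hz, hz'⟩

end Split

theorem IsBoundaryWalk.exists_mem_trees :
    ∀ {D : ℕ} {L : List (List Bool)}, IsBoundaryWalk D L → ∃ T ∈ trees D, T.leaves = L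
  | _, [], ⟨_, ⟨_, _, h⟩, _⟩ => by simp at h
  | _, [x], ⟨_, ⟨x', hx, h₁⟩, ⟨y', hy, h₂⟩⟩ => by
    obtain rfl : x = x' := by simpa using h₁
    obtain rfl : x = y' := by simpa using h₂
    exact ⟨leaf, leaf_mem_trees _, by simp [leaves, eq_nil_of_mem_Bl_of_mem_Br hx hy]⟩
  | 0, x :: y :: _, h => (not_mem_S_zero x y (List.isChain_cons_cons.1 h.1).1).elim
  | _ + 1, _ :: _ :: _, h => by
    obtain ⟨A, B, hAB, hA, hB⟩ := h.exists_split
    obtain ⟨Ta, hTa, rfl⟩ := hA.exists_mem_trees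
    obtain ⟨Tb, hTb, rfl⟩ := hB.exists_mem_trees
    exact ⟨node Ta Tb, node_mem_trees_succ.2 ⟨hTa, hTb⟩, hAB.symm⟩

theorem leaves_injective : Function.Injective leaves := by
  intro T₁ T₂ h
  induction T₁ generalizing T₂ with
  | leaf =>
    cases T₂ with
    | leaf => rfl
    | node => simpa [leaves] using congrArg ([] ∈ ·) h
  | node a b iha ihb =>
    cases T₂ with
    | leaf => simpa [leaves] using congrArg ([] ∈ ·) h
    | node a' b' =>
      let keep (c : Bool) (v : List Bool) : Option (List Bool) :=
        if v.getLast? = some c then some v.dropLast else none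
      have ha := congrArg (List.filterMap (keep false)) h
      have hb := congrArg (List.filterMap (keep true)) h
      simp [keep, leaves, List.filterMap_append, List.filterMap_map] at ha hb
      rw [iha ha, ihb hb]

section Walks

variable (E : Finset (List Bool × List Bool)) (I : Finset (List Bool))

def walks : ℕ → List Bool → Finset (List (List Bool))
  | 0, _ => ∅
  | 1, v => if v ∈ I then {[v]} else ∅
  | n + 2, v => (E.filter (·.2 = v)).biUnion fun p => (walks (n + 1) p.1).image (· ++ [v])

variable {E I}

theorem mem_walks : ∀ {n : ℕ} {v : List Bool} {L : List (List Bool)},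
    L ∈ walks E I n v ↔ L.length = n ∧ L.IsChain (fun a b => (a, b) ∈ E) ∧
      (∃ x ∈ I, L.head? = some x) ∧ L.getLast? = some v
  | 0, v, L => by
    simp only [walks, Finset.notMem_empty, false_iff]
    rintro ⟨hL, -, -, hv⟩
    simp [List.length_eq_zero_iff.1 hL] at hv
  | 1, v, L => by
    rw [walks, List.length_eq_one_iff]
    constructor
    · split_ifs <;> simp_all
    · rintro ⟨⟨a, rfl⟩, -, ⟨x, hx, hxa⟩, hv⟩
      simp_all
  | n + 2, v, L => by
    simp only [walks, Finset.mem_biUnion, Finset.mem_filter, Finset.mem_image, mem_walks]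
    constructor
    · rintro ⟨⟨u, _⟩, ⟨huv, rfl⟩, L, ⟨hlen, hchain, ⟨x, hx, hxL⟩, hu⟩, rfl⟩
      refine ⟨by simp [hlen], hchain.append (.singleton _) (by simpa [hu] using huv),
        ⟨x, hx, by simp [List.head?_append, hxL]⟩, List.getLast?_concat⟩
    · rintro ⟨hlen, hchain, ⟨x, hx, hxL⟩, hv⟩
      obtain ⟨L, rfl⟩ := List.getLast?_eq_some_iff.1 hv
      have hne : L ≠ [] := by rintro rfl; simp at hlen
      obtain ⟨hL, -, hbridge⟩ := List.isChain_append.1 hchain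
      refine ⟨(L.getLast hne, v), ⟨?_, rfl⟩, L, ⟨by simpa using hlen, hL, ⟨x, hx, ?_⟩, ?_⟩, rfl⟩
      · exact hbridge _ (List.getLast?_eq_some_getLast hne) v rfl
      · rwa [List.head?_append_of_ne_nil _ hne] at hxL
      · exact List.getLast?_eq_some_getLast hne

theorem disjoint_walks {n : ℕ} {u v : List Bool} (huv : u ≠ v) :
    Disjoint (walks E I n u) (walks E I n v) :=
  Finset.disjoint_left.2 fun _ hu hv =>
    huv (Option.some_injective _ ((mem_walks.1 hu).2.2.2.symm.trans (mem_walks.1 hv).2.2.2))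

theorem M_eq_sum_walks (w : ℕ → List Bool → ℝ) (mw : List Bool → ℝ) : ∀ (n : ℕ) (v : List Bool),
    M E I w mw n v =
      ∑ L ∈ walks E I n v, ∏ i ∈ Finset.range n, w (i + 1) (L.getD i []) * mw (L.getD i [])
  | 0, v => by simp [M, walks]
  | 1, v => by by_cases hv : v ∈ I <;> simp [M, walks, hv]
  | n + 2, v => by
    have hdisj : ((E.filter (·.2 = v) : Finset _) : Set (List Bool × List Bool)).PairwiseDisjoint
        fun p => (walks E I (n + 1) p.1).image (· ++ [v]) := by
      intro p hp q hq hpq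
      refine (Finset.disjoint_image (List.append_left_injective [v])).2 (disjoint_walks ?_)
      rw [Finset.mem_coe, Finset.mem_filter] at hp hq
      exact fun h => hpq (Prod.ext h (hp.2.trans hq.2.symm))
    rw [M, walks, Finset.sum_biUnion hdisj, Finset.mul_sum]
    refine Finset.sum_congr rfl fun p _ => ?_
    rw [Finset.sum_image fun _ _ _ _ h => List.append_left_injective [v] h,
      M_eq_sum_walks w mw (n + 1) p.1, Finset.mul_sum]
    refine Finset.sum_congr rfl fun L hL => ?_
    rw [Finset.prod_range_succ_getD_append_singleton (fun i x => w (i + 1) x * mw x)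
      (mem_walks.1 hL).1]
    ring

end Walks

theorem biUnion_walks_eq_image_leaves (D N : ℕ) :
    (Br D).biUnion (walks (S D) (Bl D) N) =
      ((trees D).filter fun T => T.leaves.length = N).image leaves := by
  ext L
  simp only [Finset.mem_biUnion, mem_walks, Finset.mem_image, Finset.mem_filter]
  constructor
  · rintro ⟨v, hv, hlen, hchain, hhead, hlast⟩
    obtain ⟨T, hT, rfl⟩ := IsBoundaryWalk.exists_mem_trees ⟨hchain, hhead, v, hv, hlast⟩
    exact ⟨T, ⟨hT, hlen⟩, rfl⟩
  · rintro ⟨T, ⟨hT, hlen⟩, rfl⟩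
    obtain ⟨hchain, hhead, v, hv, hlast⟩ := isBoundaryWalk_leaves hT
    exact ⟨v, hv, hlen, hchain, hhead, hlast⟩

end FBT

theorem stmt12_general (D N : ℕ) (w : ℕ → List Bool → ℝ) (mw : List Bool → ℝ) :
    ∑ v ∈ FBT.Br D, FBT.M (FBT.S D) (FBT.Bl D) w mw N v =
      ∑ T ∈ (FBT.trees D).filter (fun T => T.leaves.length = N),
        ∏ n ∈ Finset.range N, w (n + 1) (T.leaves.getD n []) * mw (T.leaves.getD n []) := by
  rw [Finset.sum_congr rfl fun v _ => FBT.M_eq_sum_walks w mw N v,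
    ← Finset.sum_biUnion fun u _ v _ huv => FBT.disjoint_walks huv,
    FBT.biUnion_walks_eq_image_leaves, Finset.sum_image FBT.leaves_injective.injOn]

/-- correctness of the marginalisation dynamic program: the sum
of the DP table over the right boundary equals the sum, over internal trees
with `N` leaves, of the product of the weights at their leaves. -/
theorem stmt12 (D N : ℕ) (hN : 1 ≤ N) (w : ℕ → List Bool → ℝ) (mw : List Bool → ℝ)
    (hw : ∀ n v, 0 ≤ w n v) (hm : ∀ v, 0 ≤ mw v) :
    ∑ v ∈ FBT.Br D, FBT.M (FBT.S D) (FBT.Bl D) w mw N v =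
      ∑ T ∈ (FBT.trees D).filter (fun T => T.leaves.length = N),
        ∏ n ∈ Finset.range N, w (n + 1) (T.leaves.getD n []) * mw (T.leaves.getD n []) :=
  stmt12_general D N w mw
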